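/- arXiv:2012.11031 — 4 statements merged into one kernel-verified Lean document; each statement's English description precedes it below -/
import Mathlib

section
/- If β ∈ 2^ℕ is a branch of a pruned binary tree T containing infinitely many 1s, then T admits a Σ-coloring, i.e., a function f : T → ℕ satisfying: (Σ1) f(root) ≥ 1; (Σ2) if f(s) = 1 then s⌢1 ∈ T and f(s⌢1) ≥ 1; (Σ3) if f(s) ≥ 2 then s⌢0 ∈ T and f(s⌢0) = f(s) − 1. -/
/-- A set-theoretic binary tree: a nonempty subset of `List Bool`
closed under taking initial segments. -/
def IsSTTree (T : Set (List Bool)) : Prop :=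
  T.Nonempty ∧ ∀ s ∈ T, ∀ t : List Bool, t <+: s → t ∈ T

/-- A tree is pruned if every vertex has at least one child. -/
def IsPruned (T : Set (List Bool)) : Prop :=
  ∀ s ∈ T, s ++ [false] ∈ T ∨ s ++ [true] ∈ T

/-- The initial segment of length `n` of an infinite binary sequence. -/
def pref (β : ℕ → Bool) (n : ℕ) : List Bool := List.ofFn (fun i : Fin n => β i)

/-- `β` is a branch of `T`: all its finite initial segments lie in `T`. -/
def IsBranch (T : Set (List Bool)) (β : ℕ → Bool) : Prop := ∀ n, pref β n ∈ T

/-- `β` contains infinitely many 1s. -/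
def InfManyOnes (β : ℕ → Bool) : Prop := ∀ N, ∃ n ≥ N, β n = true

/-- A Σ-coloring of a binary tree `T`:
(Σ1) the root gets color ≥ 1;
(Σ2) if `f s = 1` then the right child `s⌢1` is in `T` with color ≥ 1;
(Σ3) if `f s ≥ 2` then the left child `s⌢0` is in `T` with color `f s - 1`. -/
def SigmaColoring (T : Set (List Bool)) (f : List Bool → ℕ) : Prop :=
  1 ≤ f [] ∧
  (∀ s ∈ T, f s = 1 → s ++ [true] ∈ T ∧ 1 ≤ f (s ++ [true])) ∧
  (∀ s ∈ T, 2 ≤ f s → s ++ [false] ∈ T ∧ f (s ++ [false]) = f s - 1)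

/-- If a pruned binary tree has a branch with infinitely many 1s,
then it admits a Σ-coloring. -/
theorem stmt0 (T : Set (List Bool)) (hT : IsSTTree T) (hP : IsPruned T)
    (β : ℕ → Bool) (hβ : IsBranch T β) (h1 : InfManyOnes β) :
    ∃ f : List Bool → ℕ, SigmaColoring T f := by
  classical
  have hm : ∀ n, ∃ k, n ≤ k ∧ β k = true := by
    intro n; obtain ⟨k, hk, hb⟩ := h1 n; exact ⟨k, hk, hb⟩
  set m : ℕ → ℕ := fun n => Nat.find (hm n) with hmdef
  have hms : ∀ n, n ≤ m n ∧ β (m n) = true := fun n => Nat.find_spec (hm n)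
  have hmin : ∀ n k, n ≤ k → β k = true → m n ≤ k := by
    intro n k h1' h2'; exact Nat.find_min' (hm n) ⟨h1', h2'⟩
  have hlen : ∀ n, (pref β n).length = n := by
    intro n; simp [pref]
  have hsucc : ∀ n, pref β (n + 1) = pref β n ++ [β n] := by
    intro n
    rw [pref, List.ofFn_succ']
    simp [pref, List.concat_eq_append]
  refine ⟨fun s => if s = pref β s.length then m s.length - s.length + 1 else 0, ?_, ?_, ?_⟩ <;> beta_reduce
  · have : ([] : List Bool) = pref β ([] : List Bool).length := by simp [pref]
    rw [if_pos this]; omega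
  · intro s hs hfs
    beta_reduce at hfs ⊢
    by_cases h : s = pref β s.length
    · rw [if_pos h] at hfs
      set n := s.length with hn
      have hmn : m n = n := by have := (hms n).1; omega
      have hβn : β n = true := by have := (hms n).2; rwa [hmn] at this
      have heq : s ++ [true] = pref β (n + 1) := by
        rw [hsucc n, hβn, ← h]
      have hmem : s ++ [true] ∈ T := heq ▸ hβ (n + 1)
      refine ⟨hmem, ?_⟩
      have hlen2 : (s ++ [true]).length = n + 1 := by simp [← hn]
      rw [if_pos (by rw [hlen2, heq]), hlen2]
      have := (hms (n + 1)).1; omega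
    · rw [if_neg h] at hfs; omega
  · intro s hs hfs
    beta_reduce at hfs ⊢
    by_cases h : s = pref β s.length
    · rw [if_pos h] at hfs
      set n := s.length with hn
      have hlt : n < m n := by omega
      have hβn : β n = false := by
        by_contra hc
        have : β n = true := by simpa using hc
        have := hmin n n le_rfl this; omega
      have heq : s ++ [false] = pref β (n + 1) := by
        rw [hsucc n, hβn, ← h]
      have hmem : s ++ [false] ∈ T := heq ▸ hβ (n + 1)
      refine ⟨hmem, ?_⟩
      have hlen2 : (s ++ [false]).length = n + 1 := by simp [← hn]
      rw [if_pos (by rw [hlen2, heq]), if_pos h, hlen2]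
      have hle1 : m (n + 1) ≤ m n := hmin (n + 1) (m n) hlt (hms n).2
      have hle2 : m n ≤ m (n + 1) := hmin n (m (n + 1)) (le_trans (Nat.le_succ n) (hms (n + 1)).1) (hms (n + 1)).2
      omega
    · rw [if_neg h] at hfs; omega
end

section
/- If a pruned binary tree T admits a Σ-coloring, then T has a branch containing infinitely many 1s. -/
/-- The canonical sequence of nodes: go right when color is 1, else left. -/
def seqA (f : List Bool → ℕ) : ℕ → List Bool
  | 0 => []
  | n + 1 => if f (seqA f n) = 1 then seqA f n ++ [true] else seqA f n ++ [false]

lemma seqA_inv (T : Set (List Bool)) (hT : IsSTTree T) (f : List Bool → ℕ)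
    (hf : SigmaColoring T f) : ∀ n, seqA f n ∈ T ∧ 1 ≤ f (seqA f n) := by
  obtain ⟨h1, h2, h3⟩ := hf
  intro n
  induction n with
  | zero =>
    obtain ⟨s, hs⟩ := hT.1
    exact ⟨hT.2 s hs [] (List.nil_prefix), h1⟩
  | succ n ih =>
    by_cases hc : f (seqA f n) = 1
    · have := h2 _ ih.1 hc
      simp only [seqA, hc, if_pos rfl]
      exact this
    · have h2le : 2 ≤ f (seqA f n) := by omega
      have := h3 _ ih.1 h2le
      simp only [seqA, if_neg hc]
      exact ⟨this.1, by omega⟩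

lemma seqA_one (T : Set (List Bool)) (hT : IsSTTree T) (f : List Bool → ℕ)
    (hf : SigmaColoring T f) : ∀ c N, f (seqA f N) ≤ c → ∃ n ≥ N, f (seqA f n) = 1 := by
  intro c
  induction c with
  | zero => intro N hle; have := (seqA_inv T hT f hf N).2; omega
  | succ c ih =>
    intro N hle
    by_cases hc : f (seqA f N) = 1
    · exact ⟨N, le_refl N, hc⟩
    · have h1 := (seqA_inv T hT f hf N).2
      have h2le : 2 ≤ f (seqA f N) := by omega
      have h3 := hf.2.2 _ (seqA_inv T hT f hf N).1 h2le
      have hstep : seqA f (N + 1) = seqA f N ++ [false] := by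
        simp only [seqA, if_neg hc]
      have : f (seqA f (N + 1)) ≤ c := by rw [hstep, h3.2]; omega
      obtain ⟨n, hn, h⟩ := ih (N + 1) this
      exact ⟨n, by omega, h⟩

/-- If a pruned binary tree admits a Σ-coloring, then it has a branch
containing infinitely many 1s. -/
theorem stmt1 (T : Set (List Bool)) (hT : IsSTTree T) (hP : IsPruned T)
    (f : List Bool → ℕ) (hf : SigmaColoring T f) :
    ∃ β : ℕ → Bool, IsBranch T β ∧ InfManyOnes β := by
  set β : ℕ → Bool := fun n => if f (seqA f n) = 1 then true else false with hβ
  have hpref : ∀ n, pref β n = seqA f n := by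
    intro n
    induction n with
    | zero => rfl
    | succ n ih =>
      have : pref β (n + 1) = pref β n ++ [β n] := by
        simp only [pref, List.ofFn_succ', List.concat_eq_append, Fin.coe_castSucc, Fin.val_last]
      rw [this, ih, hβ]
      by_cases hc : f (seqA f n) = 1 <;> simp [seqA, hc]
  refine ⟨β, ?_, ?_⟩
  · intro n
    rw [hpref]
    exact (seqA_inv T hT f hf n).1
  · intro N
    obtain ⟨n, hn, h⟩ := seqA_one T hT f hf (f (seqA f N)) N le_rfl
    exact ⟨n, hn, by simp [hβ, h]⟩
end

section
/- A pruned binary tree T admits a Σ-coloring if and only if T has a branch containing infinitely many 1s (equivalently, T ∉ F, where F is the set of pruned binary trees all of whose branches contain only finitely many 1s). -/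
/-!
A Σ-coloring is a countdown to the next right turn: a color `k ≥ 2` forces `k - 1` left
steps, after which color `1` forces a right step. Following these instructions from the
root gives a branch that turns right infinitely often. Conversely, along a branch `β`
with infinitely many 1s, coloring the `n`-th vertex by one plus the distance from `n`
to the next 1 of `β` (and everything off the branch by `0`) is a Σ-coloring.
-/

theorem pref_succ (β : ℕ → Bool) (n : ℕ) : pref β (n + 1) = pref β n ++ [β n] := by
  rw [pref, List.ofFn_succ']
  simp [pref, List.concat_eq_append]

theorem length_pref (β : ℕ → Bool) (n : ℕ) : (pref β n).length = n := by
  simp [pref]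

theorem IsSTTree.nil_mem {T : Set (List Bool)} (hT : IsSTTree T) : [] ∈ T :=
  let ⟨s, hs⟩ := hT.1
  hT.2 s hs [] List.nil_prefix

section Coloring

variable {T : Set (List Bool)} {f : List Bool → ℕ}

def colorPath (f : List Bool → ℕ) : ℕ → List Bool
  | 0 => []
  | n + 1 => colorPath f n ++ [decide (f (colorPath f n) = 1)]

def colorBranch (f : List Bool → ℕ) (n : ℕ) : Bool := decide (f (colorPath f n) = 1)

theorem pref_colorBranch (f : List Bool → ℕ) (n : ℕ) :
    pref (colorBranch f) n = colorPath f n := by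
  induction n with
  | zero => rfl
  | succ n ih => rw [pref_succ, ih]; rfl

namespace SigmaColoring

theorem colorPath_mem_and_pos (hf : SigmaColoring T f) (h0 : [] ∈ T) (n : ℕ) :
    colorPath f n ∈ T ∧ 1 ≤ f (colorPath f n) := by
  induction n with
  | zero => exact ⟨h0, hf.1⟩
  | succ n ih =>
    obtain ⟨hmem, hpos⟩ := ih
    rcases hpos.eq_or_lt with hone | htwo
    · simpa [colorPath, ← hone] using hf.2.1 _ hmem hone.symm
    · obtain ⟨hmem', hcolor⟩ := hf.2.2 _ hmem htwo
      simp only [colorPath, htwo.ne', decide_false]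
      exact ⟨hmem', by omega⟩

theorem isBranch_colorBranch (hf : SigmaColoring T f) (h0 : [] ∈ T) :
    IsBranch T (colorBranch f) := fun n => by
  rw [pref_colorBranch]
  exact (hf.colorPath_mem_and_pos h0 n).1

theorem colorPath_succ_of_two_le (hf : SigmaColoring T f) {n : ℕ} (hmem : colorPath f n ∈ T)
    (htwo : 2 ≤ f (colorPath f n)) :
    f (colorPath f (n + 1)) = f (colorPath f n) - 1 := by
  have hne : f (colorPath f n) ≠ 1 := by omega
  simp only [colorPath, hne, decide_false]
  exact (hf.2.2 _ hmem htwo).2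

theorem infManyOnes_colorBranch (hf : SigmaColoring T f) (h0 : [] ∈ T) :
    InfManyOnes (colorBranch f) := by
  suffices h : ∀ k N, f (colorPath f N) = k + 1 → ∃ n ≥ N, f (colorPath f n) = 1 by
    intro N
    obtain ⟨n, hn, hone⟩ :=
      h _ N (Nat.succ_pred_eq_of_pos (hf.colorPath_mem_and_pos h0 N).2).symm
    exact ⟨n, hn, decide_eq_true hone⟩
  intro k
  induction k with
  | zero => exact fun N hN => ⟨N, le_rfl, hN⟩
  | succ k ih =>
    intro N hN
    have hstep := hf.colorPath_succ_of_two_le (hf.colorPath_mem_and_pos h0 N).1 (by omega)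
    obtain ⟨n, hn, hone⟩ := ih (N + 1) (by omega)
    exact ⟨n, by omega, hone⟩

end SigmaColoring

end Coloring

namespace InfManyOnes

variable {β : ℕ → Bool}

theorem exists_add_eq_true (hβ : InfManyOnes β) (N : ℕ) : ∃ k, β (N + k) = true :=
  let ⟨n, hn, h⟩ := hβ N
  ⟨n - N, by rwa [Nat.add_sub_cancel' hn]⟩

noncomputable def gap (hβ : InfManyOnes β) (N : ℕ) : ℕ := Nat.find (hβ.exists_add_eq_true N)

theorem gap_eq_zero_iff (hβ : InfManyOnes β) {N : ℕ} : hβ.gap N = 0 ↔ β N = true := by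
  simp [gap]

theorem gap_eq_gap_succ_add_one (hβ : InfManyOnes β) {N : ℕ} (h : β N = false) :
    hβ.gap N = hβ.gap (N + 1) + 1 := by
  have hsucc : ∃ k, β (N + (k + 1)) = true := by
    simpa only [Nat.add_right_comm N 1, Nat.add_assoc] using hβ.exists_add_eq_true (N + 1)
  rw [gap, Nat.find_comp_succ _ hsucc (by simp [h]), gap]
  congr 1
  simp only [← Nat.add_assoc, Nat.add_right_comm N]

noncomputable def coloring (hβ : InfManyOnes β) (s : List Bool) : ℕ :=
  if s = pref β s.length then hβ.gap s.length + 1 else 0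

theorem coloring_pref (hβ : InfManyOnes β) (n : ℕ) :
    hβ.coloring (pref β n) = hβ.gap n + 1 := by
  simp [coloring, length_pref]

theorem exists_eq_pref_of_coloring_ne_zero (hβ : InfManyOnes β) {s : List Bool}
    (h : hβ.coloring s ≠ 0) : ∃ n, s = pref β n := by
  unfold coloring at h
  split_ifs at h with hs
  · exact ⟨_, hs⟩
  · exact absurd rfl h

theorem sigmaColoring (hβ : InfManyOnes β) {T : Set (List Bool)} (hb : IsBranch T β) :
    SigmaColoring T hβ.coloring := by
  refine ⟨(hβ.coloring_pref 0).symm ▸ Nat.le_add_left 1 _, ?_, ?_⟩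
  · intro s _ hone
    obtain ⟨n, rfl⟩ := hβ.exists_eq_pref_of_coloring_ne_zero (s := s) (by omega)
    rw [coloring_pref] at hone
    have htrue : β n = true := hβ.gap_eq_zero_iff.1 (by omega)
    rw [← htrue, ← pref_succ, coloring_pref]
    exact ⟨hb _, by omega⟩
  · intro s _ htwo
    obtain ⟨n, rfl⟩ := hβ.exists_eq_pref_of_coloring_ne_zero (s := s) (by omega)
    rw [coloring_pref] at htwo ⊢
    have hfalse : β n = false := by
      simpa using mt hβ.gap_eq_zero_iff.2 (by omega)
    rw [← hfalse, ← pref_succ, coloring_pref, hβ.gap_eq_gap_succ_add_one hfalse]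
    exact ⟨hb _, by omega⟩

end InfManyOnes

theorem stmt2_general (T : Set (List Bool)) (hT : IsSTTree T) :
    (∃ f : List Bool → ℕ, SigmaColoring T f) ↔
      (∃ β : ℕ → Bool, IsBranch T β ∧ InfManyOnes β) := by
  constructor
  · rintro ⟨f, hf⟩
    exact ⟨colorBranch f, hf.isBranch_colorBranch hT.nil_mem,
      hf.infManyOnes_colorBranch hT.nil_mem⟩
  · rintro ⟨β, hb, hβ⟩
    exact ⟨hβ.coloring, hβ.sigmaColoring hb⟩

/-- A pruned binary tree admits a Σ-coloring iff it has a branch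
containing infinitely many 1s (equivalently, iff it is not in `F`). -/
theorem stmt2 (T : Set (List Bool)) (hT : IsSTTree T) (hP : IsPruned T) :
    (∃ f : List Bool → ℕ, SigmaColoring T f) ↔
      (∃ β : ℕ → Bool, IsBranch T β ∧ InfManyOnes β) :=
  stmt2_general T hT
end

section
/- The set F of pruned binary trees T ⊆ List Bool such that every branch of T contains only finitely many 1s is a complete co-analytic subset of the standard Borel space of pruned binary trees. -/
/-- The subset of `List Bool` coded by a characteristic function. -/
def treeSet (T : List Bool → Bool) : Set (List Bool) := {s | T s = true}

/-- The space of (codes of) pruned set-theoretic binary trees,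
as a subset of the Polish space `2^(List Bool)`. -/
def PTr2 : Set (List Bool → Bool) :=
  {T | IsSTTree (treeSet T) ∧ IsPruned (treeSet T)}

/-- The set `F` of pruned binary trees all of whose branches contain
only finitely many 1s. -/
def Fset : Set (List Bool → Bool) :=
  {T | T ∈ PTr2 ∧ ∀ β : ℕ → Bool, IsBranch (treeSet T) β → ∃ N, ∀ n ≥ N, β n = false}

/-!
`PTr2 \ Fset` is the projection to the first coordinate of the Borel set of pairs `(T, β)` with
`β` a branch of `T` containing infinitely many 1s, hence analytic.

For completeness, write the analytic set `Bᶜ` as the range of a continuous `g : ℕ^ℕ → Y`. Then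
`y ∈ Bᶜ` iff the tree `S_y = {u | y ∈ closure (g '' N_u)}` on `ℕ`, where `N_u` is the set of
sequences extending `u`, has an infinite branch; each `{y | u ∈ S_y}` is closed. Reading a binary word `0^n₀ 1 0^n₁ 1 ⋯` as the sequence
`(n₀, n₁, …)` turns a tree `S` on `ℕ` into a pruned binary tree whose branches with infinitely
many 1s are exactly the codes of the infinite branches of `S`.
-/

open MeasureTheory Topology

lemma infManyOnes_iff_not_eventually_false (β : ℕ → Bool) :
    InfManyOnes β ↔ ¬ ∃ N, ∀ n ≥ N, β n = false := by
  simp [InfManyOnes]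

lemma measurableSet_PTr2 : MeasurableSet PTr2 := by
  simp only [PTr2, IsSTTree, IsPruned, treeSet, Set.Nonempty]
  exact measurableSet_setOfPred.2 (by fun_prop)

lemma measurableSet_pref_eq (n : ℕ) (w : List Bool) :
    MeasurableSet {β : ℕ → Bool | pref β n = w} :=
  (Set.to_countable {v : Fin n → Bool | List.ofFn v = w}).measurableSet.preimage
    (measurable_pi_lambda _ fun i => measurable_pi_apply (i : ℕ))

lemma measurableSet_isBranch :
    MeasurableSet {p : (List Bool → Bool) × (ℕ → Bool) | IsBranch (treeSet p.1) p.2} := by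
  have hpref : ∀ n w, Measurable fun p : (List Bool → Bool) × (ℕ → Bool) => pref p.2 n = w :=
    fun n w => measurableSet_setOfPred.1 ((measurableSet_pref_eq n w).preimage measurable_snd)
  have hset : {p : (List Bool → Bool) × (ℕ → Bool) | IsBranch (treeSet p.1) p.2} =
      {p | ∀ n, ∃ w, pref p.2 n = w ∧ p.1 w = true} := by
    simp [IsBranch, treeSet]
  rw [hset]
  exact measurableSet_setOfPred.2 (by fun_prop)

lemma measurableSet_infManyOnes : MeasurableSet {β : ℕ → Bool | InfManyOnes β} := by
  simp only [InfManyOnes]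
  exact measurableSet_setOfPred.2 (by fun_prop)

lemma analyticSet_PTr2_diff_Fset : AnalyticSet (PTr2 \ Fset) := by
  have hS : MeasurableSet {p : (List Bool → Bool) × (ℕ → Bool) |
      p.1 ∈ PTr2 ∧ IsBranch (treeSet p.1) p.2 ∧ InfManyOnes p.2} :=
    (measurable_fst measurableSet_PTr2).inter
      (measurableSet_isBranch.inter (measurable_snd measurableSet_infManyOnes))
  convert hS.analyticSet_image measurable_fst
  ext T
  simp [Fset, infManyOnes_iff_not_eventually_false]

def initSeg {α : Type*} (x : ℕ → α) (m : ℕ) : List α := List.ofFn fun i : Fin m => x i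

section initSeg

variable {α : Type*} (x : ℕ → α)

lemma pref_eq_initSeg (β : ℕ → Bool) : pref β = initSeg β := rfl

@[simp] lemma length_initSeg (m : ℕ) : (initSeg x m).length = m := by simp [initSeg]

@[simp] lemma getElem_initSeg {m i : ℕ} (h : i < (initSeg x m).length) :
    (initSeg x m)[i] = x i := by
  simp [initSeg]

lemma initSeg_succ (m : ℕ) : initSeg x (m + 1) = initSeg x m ++ [x m] := by
  rw [initSeg, List.ofFn_succ', List.concat_eq_append]
  rfl

lemma initSeg_prefix {k m : ℕ} (h : k ≤ m) : initSeg x k <+: initSeg x m := by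
  induction m, h using Nat.le_induction with
  | base => exact List.prefix_refl _
  | succ m _ ih => exact ih.trans (by rw [initSeg_succ]; exact List.prefix_append _ _)

end initSeg

lemma exists_initSeg_eq_of_prefix_chain {α : Type*} {d : ℕ → List α}
    (hd : ∀ ⦃k m⦄, k ≤ m → d k <+: d m) (hlen : ∀ k, ∃ n, k < (d n).length) :
    ∃ x : ℕ → α, ∀ n, initSeg x (d n).length = d n := by
  choose N hN using hlen
  refine ⟨fun k => (d (N k))[k]'(hN k), fun n => List.ext_getElem (by simp) fun i hi _ => ?_⟩
  simp only [getElem_initSeg]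
  rcases le_total (N i) n with h | h
  · exact (hd h).getElem (hN i)
  · exact ((hd h).getElem _).symm

/-- Reading `s` as `0^n₀ 1 ⋯ 0^nₖ₋₁ 1 0^r`, preceded by `a` further zeros, `blockLengths s a` is
the list of lengths of the completed blocks and `openBlockLength s a` the length of the last,
still open one. -/
def blockLengths : List Bool → ℕ → List ℕ
  | [], _ => []
  | false :: s, a => blockLengths s (a + 1)
  | true :: s, a => a :: blockLengths s 0

def openBlockLength : List Bool → ℕ → ℕ
  | [], a => a
  | false :: s, a => openBlockLength s (a + 1)
  | true :: s, _ => openBlockLength s 0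

def encodeBlocks (u : List ℕ) : List Bool :=
  u.flatMap fun n => List.replicate n false ++ [true]

lemma blockLengths_append (s t : List Bool) (a : ℕ) :
    blockLengths (s ++ t) a = blockLengths s a ++ blockLengths t (openBlockLength s a) := by
  induction s generalizing a with
  | nil => rfl
  | cons b s ih => cases b <;> simp [blockLengths, openBlockLength, ih]

lemma blockLengths_append_false (s : List Bool) (a : ℕ) :
    blockLengths (s ++ [false]) a = blockLengths s a := by
  simp [blockLengths_append, blockLengths]

lemma blockLengths_prefix {s t : List Bool} (h : s <+: t) (a : ℕ) :
    blockLengths s a <+: blockLengths t a := by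
  obtain ⟨r, rfl⟩ := h
  rw [blockLengths_append]
  exact List.prefix_append _ _

lemma length_blockLengths (s : List Bool) (a : ℕ) :
    (blockLengths s a).length = s.count true := by
  induction s generalizing a with
  | nil => rfl
  | cons b s ih => cases b <;> simp [blockLengths, ih]

lemma blockLengths_replicate_append_true (n a : ℕ) :
    blockLengths (List.replicate n false ++ [true]) a = [a + n] := by
  induction n generalizing a with
  | zero => rfl
  | succ n ih =>
    simp [List.replicate_succ, blockLengths, ih, Nat.add_right_comm, Nat.add_assoc]

lemma openBlockLength_append_true (s : List Bool) (a : ℕ) :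
    openBlockLength (s ++ [true]) a = 0 := by
  induction s generalizing a with
  | nil => rfl
  | cons b s ih => cases b <;> simp [openBlockLength, ih]

lemma blockLengths_encodeBlocks (u : List ℕ) : blockLengths (encodeBlocks u) 0 = u := by
  induction u with
  | nil => rfl
  | cons n u ih =>
    rw [encodeBlocks, List.flatMap_cons, blockLengths_append, blockLengths_replicate_append_true,
      openBlockLength_append_true, zero_add, List.singleton_append]
    exact congrArg (n :: ·) ih

lemma length_le_length_encodeBlocks (u : List ℕ) : u.length ≤ (encodeBlocks u).length := by
  induction u with
  | nil => rfl
  | cons n u ih =>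
    simp only [encodeBlocks, List.flatMap_cons, List.length_cons, List.length_append] at ih ⊢
    omega

lemma encodeBlocks_concat (u : List ℕ) (n : ℕ) :
    encodeBlocks (u ++ [n]) = encodeBlocks u ++ List.replicate n false ++ [true] := by
  simp [encodeBlocks]

open Classical in
noncomputable def codeTree (Q : List ℕ → Prop) : List Bool → Bool :=
  fun s => decide (Q (blockLengths s 0))

lemma mem_treeSet_codeTree (Q : List ℕ → Prop) (s : List Bool) :
    s ∈ treeSet (codeTree Q) ↔ Q (blockLengths s 0) := by
  simp [treeSet, codeTree]

lemma measurable_codeTree {Y : Type*} [MeasurableSpace Y] {Q : Y → List ℕ → Prop}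
    (hQ : ∀ u, MeasurableSet {y | Q y u}) : Measurable fun y => codeTree (Q y) :=
  measurable_pi_lambda _ fun s =>
    measurable_to_bool <| by simpa [Set.preimage, codeTree] using hQ (blockLengths s 0)

lemma InfManyOnes.exists_le_count {β : ℕ → Bool} (hβ : InfManyOnes β) (k : ℕ) :
    ∃ n, k ≤ (pref β n).count true := by
  induction k with
  | zero => exact ⟨0, Nat.zero_le _⟩
  | succ k ih =>
    obtain ⟨n, hn⟩ := ih
    obtain ⟨n', hn', hβn'⟩ := hβ n
    refine ⟨n' + 1, ?_⟩
    have hmono := (initSeg_prefix β hn').sublist.count_le true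
    rw [pref_eq_initSeg] at hn ⊢
    rw [initSeg_succ, List.count_append, hβn', List.count_singleton_self]
    omega

section codeTree

variable {Q : List ℕ → Prop} (hQ : ∀ ⦃u v⦄, u <+: v → Q v → Q u)
include hQ

lemma codeTree_mem_PTr2 (hnil : Q []) : codeTree Q ∈ PTr2 := by
  refine ⟨⟨⟨[], (mem_treeSet_codeTree Q []).2 hnil⟩, fun s hs t ht => ?_⟩,
    fun s hs => Or.inl ?_⟩
  · rw [mem_treeSet_codeTree] at hs ⊢
    exact hQ (blockLengths_prefix ht 0) hs
  · rw [mem_treeSet_codeTree] at hs ⊢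
    rwa [blockLengths_append_false]

lemma exists_branch_codeTree_of_branch {x : ℕ → ℕ} (hx : ∀ m, Q (initSeg x m)) :
    ∃ β, IsBranch (treeSet (codeTree Q)) β ∧ InfManyOnes β := by
  have hlen : ∀ n, n ≤ (encodeBlocks (initSeg x n)).length := fun n => by
    simpa using length_le_length_encodeBlocks (initSeg x n)
  obtain ⟨β, hβ⟩ :=
    exists_initSeg_eq_of_prefix_chain (d := fun n => encodeBlocks (initSeg x n))
      (fun k m h => (initSeg_prefix x h).flatMap _) fun k => ⟨k + 1, hlen (k + 1)⟩
  -- `β` is the infinite word `0^(x 0) 1 0^(x 1) 1 ⋯`.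
  refine ⟨β, fun m => ?_, fun N => ?_⟩
  · have hpre : pref β m <+: encodeBlocks (initSeg x m) := by
      rw [← hβ m]
      exact initSeg_prefix β (hlen m)
    rw [mem_treeSet_codeTree]
    refine hQ ?_ (hx m)
    simpa [blockLengths_encodeBlocks] using blockLengths_prefix hpre 0
  · have hcode := hβ (N + 1)
    rw [initSeg_succ, encodeBlocks_concat] at hcode
    set w := encodeBlocks (initSeg x N) ++ List.replicate (x N) false
    refine ⟨w.length, ?_, ?_⟩
    · have := hlen N
      simp only [w, List.length_append]
      omega
    · have hp := List.getElem_of_eq hcode (i := w.length) (by simp)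
      rwa [getElem_initSeg, List.getElem_concat_length rfl] at hp

lemma exists_branch_of_branch_codeTree {β : ℕ → Bool}
    (hβ : IsBranch (treeSet (codeTree Q)) β) (hinf : InfManyOnes β) :
    ∃ x : ℕ → ℕ, ∀ m, Q (initSeg x m) := by
  obtain ⟨x, hx⟩ :=
    exists_initSeg_eq_of_prefix_chain (d := fun n => blockLengths (pref β n) 0)
      (fun k m h => blockLengths_prefix (initSeg_prefix β h) 0) fun k => by
        simpa [length_blockLengths, Nat.succ_le_iff] using hinf.exists_le_count (k + 1)
  refine ⟨x, fun m => ?_⟩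
  obtain ⟨n, hn⟩ := hinf.exists_le_count m
  have hpre : initSeg x m <+: blockLengths (pref β n) 0 := by
    rw [← hx n]
    exact initSeg_prefix x (by rwa [length_blockLengths])
  exact hQ hpre ((mem_treeSet_codeTree Q _).1 (hβ n))

lemma codeTree_mem_Fset_iff (hnil : Q []) :
    codeTree Q ∈ Fset ↔ ¬ ∃ x : ℕ → ℕ, ∀ m, Q (initSeg x m) := by
  refine ⟨fun hF ⟨x, hx⟩ => ?_, fun h => ⟨codeTree_mem_PTr2 hQ hnil, fun β hβ => ?_⟩⟩
  · obtain ⟨β, hβ, hinf⟩ := exists_branch_codeTree_of_branch hQ hx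
    exact (infManyOnes_iff_not_eventually_false β).1 hinf (hF.2 β hβ)
  · by_contra hfin
    exact h (exists_branch_of_branch_codeTree hQ hβ
      ((infManyOnes_iff_not_eventually_false β).2 hfin))

end codeTree

def cyl (u : List ℕ) : Set (ℕ → ℕ) := {z | initSeg z u.length = u}

lemma cyl_initSeg (x : ℕ → ℕ) (m : ℕ) : cyl (initSeg x m) = PiNat.cylinder x m := by
  ext z
  simp [cyl, initSeg, PiNat.mem_cylinder_iff, funext_iff, Fin.forall_iff]

lemma cyl_anti {u v : List ℕ} (h : u <+: v) : cyl v ⊆ cyl u := fun z hz => by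
  have hpre : initSeg z u.length <+: v := hz ▸ initSeg_prefix z h.length_le
  exact (List.prefix_of_prefix_length_le hpre h (by simp)).eq_of_length (by simp)

lemma exists_cylinder_subset_of_mem_nhds {x : ℕ → ℕ} {U : Set (ℕ → ℕ)} (hU : U ∈ 𝓝 x) :
    ∃ m, PiNat.cylinder x m ⊆ U := by
  obtain ⟨_, ⟨z, m, rfl⟩, hx, hsub⟩ :=
    (PiNat.isTopologicalBasis_cylinders _).mem_nhds_iff.1 hU
  exact ⟨m, PiNat.mem_cylinder_iff_eq.1 hx ▸ hsub⟩

lemma eq_of_forall_mem_closure_image_cylinder {Y : Type*} [TopologicalSpace Y] [T3Space Y]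
    {g : (ℕ → ℕ) → Y} (hg : Continuous g) {x : ℕ → ℕ} {y : Y}
    (h : ∀ m, y ∈ closure (g '' PiNat.cylinder x m)) : g x = y := by
  -- `y` lies in every closed neighbourhood of `g x`, so `y ⤳ g x`.
  refine (specializes_iff_pure.2 <|
    (closed_nhds_basis (g x)).ge_iff.2 fun V ⟨hV, hVc⟩ => ?_).eq.symm
  obtain ⟨m, hm⟩ := exists_cylinder_subset_of_mem_nhds (hg.continuousAt hV)
  exact closure_minimal (Set.image_subset_iff.2 hm) hVc (h m)

section closureTree

variable {Y : Type*} [TopologicalSpace Y] (g : (ℕ → ℕ) → Y)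

/-- The clause `u = []` keeps the root when `y ∉ closure (range g)`. -/
def closureTree (y : Y) (u : List ℕ) : Prop := u = [] ∨ y ∈ closure (g '' cyl u)

lemma closureTree_mono (y : Y) ⦃u v : List ℕ⦄ (h : u <+: v) :
    closureTree g y v → closureTree g y u := by
  rintro (rfl | hv)
  · exact Or.inl (List.prefix_nil.1 h)
  · exact Or.inr (closure_mono (Set.image_mono (cyl_anti h)) hv)

lemma measurableSet_closureTree [MeasurableSpace Y] [OpensMeasurableSpace Y] (u : List ℕ) :
    MeasurableSet {y | closureTree g y u} :=
  (MeasurableSet.const _).union isClosed_closure.measurableSet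

lemma exists_branch_closureTree_iff [T3Space Y] (hg : Continuous g) (y : Y) :
    (∃ x : ℕ → ℕ, ∀ m, closureTree g y (initSeg x m)) ↔ y ∈ Set.range g := by
  refine ⟨fun ⟨x, hx⟩ => ⟨x, eq_of_forall_mem_closure_image_cylinder hg fun m => ?_⟩, ?_⟩
  · have hne : initSeg x (m + 1) ≠ [] := List.ne_nil_of_length_pos (by simp)
    refine closure_mono (Set.image_mono ?_) ((hx (m + 1)).resolve_left hne)
    rw [cyl_initSeg]
    exact PiNat.cylinder_anti x m.le_succ
  · rintro ⟨x, rfl⟩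
    exact ⟨x, fun m => Or.inr (subset_closure ⟨x, by simp [cyl_initSeg], rfl⟩)⟩

end closureTree

lemma MeasureTheory.AnalyticSet.exists_measurable_trees {Y : Type*} [TopologicalSpace Y]
    [T3Space Y] [MeasurableSpace Y] [OpensMeasurableSpace Y] {A : Set Y} (hA : AnalyticSet A) :
    ∃ Q : Y → List ℕ → Prop, (∀ u, MeasurableSet {y | Q y u}) ∧ (∀ y, Q y []) ∧
      (∀ y ⦃u v⦄, u <+: v → Q y v → Q y u) ∧
      ∀ y, y ∈ A ↔ ∃ x : ℕ → ℕ, ∀ m, Q y (initSeg x m) := by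
  rcases (AnalyticSet_def A).mp hA with rfl | ⟨g, hg, rfl⟩
  · refine ⟨fun _ u => u = [], fun _ => MeasurableSet.const _, fun _ => rfl,
      fun _ _ _ h hv => List.prefix_nil.1 (hv ▸ h), fun y => ?_⟩
    simpa using fun x : ℕ → ℕ =>
      ⟨1, List.ne_nil_of_length_pos (by simp : 0 < (initSeg x 1).length)⟩
  · exact ⟨closureTree g, measurableSet_closureTree g, fun _ => Or.inl rfl, closureTree_mono g,
      fun y => (exists_branch_closureTree_iff g hg y).symm⟩

/-- `F` is complete co-analytic in the space of pruned binary trees: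
it is co-analytic relative to `PTr2` (i.e. `PTr2 \ F` is analytic), and every
co-analytic subset `B` of any Polish space `Y` Borel-reduces to it, i.e. there
is a Borel map `f : Y → PTr2` with `y ∈ B ↔ f y ∈ F`. -/
theorem stmt8 :
    MeasureTheory.AnalyticSet (PTr2 \ Fset) ∧
    ∀ (Y : Type) [TopologicalSpace Y] [PolishSpace Y]
      [MeasurableSpace Y] [BorelSpace Y] (B : Set Y),
      MeasureTheory.AnalyticSet Bᶜ →
      ∃ f : Y → (List Bool → Bool), Measurable f ∧ (∀ y, f y ∈ PTr2) ∧
        ∀ y, y ∈ B ↔ f y ∈ Fset := by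
  refine ⟨analyticSet_PTr2_diff_Fset, fun Y _ _ _ _ B hB => ?_⟩
  obtain ⟨Q, hmeas, hnil, hmono, hBc⟩ := hB.exists_measurable_trees
  refine ⟨fun y => codeTree (Q y), measurable_codeTree hmeas,
    fun y => codeTree_mem_PTr2 (hmono y) (hnil y), fun y => ?_⟩
  rw [codeTree_mem_Fset_iff (hmono y) (hnil y), ← hBc, Set.mem_compl_iff, not_not]
end
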